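/- Let H = ηp C + Z with ‖Z‖₂ ≤ Δ and suppose Δ ≤ ηp‖r − αe‖₂√n / 3. Let û₁, û₂ ∈ ℝ^n be orthonormal vectors with H Hᵀ ûᵢ = σ̂ᵢ² ûᵢ, where σ̂₁ ≥ σ̂₂ are the two largest singular values of H, and set Û = [û₁ û₂], U = [u₁ u₂]. Then there exists an orthogonal matrix O* ∈ ℝ^{2×2} such that ‖Û − U O*‖₂ ≤ 3Δ / (ηp·√n·‖r − αe‖₂). -/

import Mathlib

/-
Write `H = s (u₂ u₁ᵀ - u₁ u₂ᵀ) + Z` with `s = η p √n ‖r - α e‖`: the signal part is `s` times a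
rotation by a right angle of the plane `span {u₁, u₂}`. If `H Hᵀ v = σ² v` for a unit vector `v`,
then `y = Hᵀ v` has norm `σ` and `σ² v = H y` lies in the plane up to `Z y`, so the component of `v`
orthogonal to the plane has norm at most `‖Z‖ / σ`. Testing the min-max property of `σ̂₂` on a
vector of the plane orthogonal to `û₁` gives `σ̂₂ ≥ s - ‖Z‖`, so both `ûᵢ` lie within
`ε = ‖Z‖ / (s - ‖Z‖)` of the plane, i.e. `Uᵀ Û` has almost orthonormal columns. The orthogonal
polar factor `O` of this `2 × 2` matrix is explicit, and `‖Û - U O‖_F ≤ 2 ε ≤ 3 ‖Z‖ / s`.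
-/

open Matrix MeasureTheory ProbabilityTheory Real

noncomputable section

/-- Euclidean (ℓ₂) norm of a vector in ℝ^n. -/
def norm2 {n : ℕ} (x : Fin n → ℝ) : ℝ := Real.sqrt (∑ i, x i ^ 2)

/-- Entrywise maximum absolute value (ℓ_∞ norm) of a vector in ℝ^n. -/
def normInf {n : ℕ} (x : Fin n → ℝ) : ℝ := ⨆ i, |x i|

/-- Euclidean inner product on ℝ^n. -/
def inner2 {n : ℕ} (x y : Fin n → ℝ) : ℝ := ∑ i, x i * y i

/-- Spectral norm (ℓ₂ operator norm) of a real matrix. -/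
def specNorm {m n : ℕ} (A : Matrix (Fin m) (Fin n) ℝ) : ℝ :=
  ⨆ x : {x : Fin n → ℝ // norm2 x ≤ 1}, norm2 (A.mulVec x.1)

/-- Max-norm: maximum absolute value of the entries of a matrix. -/
def maxNorm {m n : ℕ} (A : Matrix (Fin m) (Fin n) ℝ) : ℝ :=
  ⨆ q : Fin m × Fin n, |A q.1 q.2|

/-- The n×2 matrix with columns u and v. -/
def twoCols {n : ℕ} (u v : Fin n → ℝ) : Matrix (Fin n) (Fin 2) ℝ :=
  Matrix.of fun i j => ![u i, v i] j

/-- The all-ones vector in ℝ^n. -/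
def onesVec (n : ℕ) : Fin n → ℝ := fun _ => 1

/-- `σ1 ≥ σ2 ≥ 0` are the two largest singular values of `H`, with corresponding
orthonormal left singular vectors `u1, u2` (eigenvectors of `H Hᵀ`). -/
def IsTopTwoSingular {n : ℕ} (H : Matrix (Fin n) (Fin n) ℝ)
    (σ1 σ2 : ℝ) (u1 u2 : Fin n → ℝ) : Prop :=
  0 ≤ σ2 ∧ σ2 ≤ σ1 ∧
  inner2 u1 u1 = 1 ∧ inner2 u2 u2 = 1 ∧ inner2 u1 u2 = 0 ∧
  (H * Hᵀ).mulVec u1 = σ1 ^ 2 • u1 ∧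
  (H * Hᵀ).mulVec u2 = σ2 ^ 2 • u2 ∧
  ∀ v : Fin n → ℝ, inner2 v u1 = 0 → inner2 v u2 = 0 →
    inner2 ((H * Hᵀ).mulVec v) v ≤ σ2 ^ 2 * inner2 v v

/-- The uniform probability measure on the interval [−M, M]. -/
def unifIcc (M : ℝ) : Measure ℝ :=
  (ENNReal.ofReal (2 * M))⁻¹ • volume.restrict (Set.Icc (-M) M)

/-- The ERO mixture law of a single pairwise measurement `R_{ij}` (with `a = r_i`, `b = r_j`):
`a − b` w.p. `ηp`, uniform on `[−M, M]` w.p. `(1−η)p`, and `0` w.p. `1−p`. -/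
def EROmix (M p η a b : ℝ) : Measure ℝ :=
  ENNReal.ofReal (η * p) • Measure.dirac (a - b) +
    ENNReal.ofReal ((1 - η) * p) • unifIcc M +
    ENNReal.ofReal (1 - p) • Measure.dirac (0 : ℝ)

/-- The Erdős–Rényi Outliers (ERO) model: `H` is skew-symmetric with zero diagonal, the
above-diagonal entries are jointly independent, and each `H_{ij}` (i < j) has the ERO
mixture law. -/
structure IsEROModel {Ω : Type} [MeasurableSpace Ω] (P : Measure Ω)
    {n : ℕ} (M p η : ℝ) (r : Fin n → ℝ)
    (H : Ω → Matrix (Fin n) (Fin n) ℝ) : Prop where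
  diag : ∀ ω i, H ω i i = 0
  skew : ∀ ω i j, H ω j i = - H ω i j
  meas : ∀ i j, Measurable fun ω => H ω i j
  indep : iIndepFun
    (fun (q : {q : Fin n × Fin n // q.1 < q.2}) ω => H ω q.1.1 q.1.2) P
  law : ∀ i j : Fin n, i < j →
    Measure.map (fun ω => H ω i j) P = EROmix M p η (r i) (r j)

open scoped RealInnerProductSpace
open WithLp

section InnerProductSpace

variable {E : Type*} [NormedAddCommGroup E] [InnerProductSpace ℝ E]

section OrthonormalFamily

variable {ι : Type*} [Fintype ι]

def projPerp (u : ι → E) : E →ₗ[ℝ] E :=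
  LinearMap.id - ∑ i, (innerₛₗ ℝ (u i)).smulRight (u i)

variable {u : ι → E}

lemma projPerp_apply (x : E) : projPerp u x = x - ∑ i, ⟪u i, x⟫ • u i := by
  simp [projPerp]

lemma Orthonormal.inner_projPerp (hu : Orthonormal ℝ u) (i : ι) (x : E) :
    ⟪u i, projPerp u x⟫ = 0 := by
  simp [projPerp_apply, inner_sub_right, hu.inner_right_fintype]

lemma Orthonormal.projPerp_eq_zero (hu : Orthonormal ℝ u) {y : E}
    (hy : y ∈ Submodule.span ℝ (Set.range u)) : projPerp u y = 0 := by
  obtain ⟨c, rfl⟩ := (Submodule.mem_span_range_iff_exists_fun ℝ).1 hy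
  rw [projPerp_apply]
  simp only [hu.inner_right_fintype, sub_self]

lemma Orthonormal.inner_projPerp_sum (hu : Orthonormal ℝ u) (x : E) (c : ι → ℝ) :
    ⟪projPerp u x, ∑ i, c i • u i⟫ = 0 := by
  rw [inner_sum]
  exact Finset.sum_eq_zero fun i _ => by
    rw [inner_smul_right, real_inner_comm, hu.inner_projPerp, mul_zero]

lemma Orthonormal.inner_sum_projPerp (hu : Orthonormal ℝ u) (x : E) (c : ι → ℝ) :
    ⟪∑ i, c i • u i, projPerp u x⟫ = 0 := by
  rw [real_inner_comm, hu.inner_projPerp_sum]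

lemma projPerp_add_sum (x : E) : projPerp u x + ∑ i, ⟪u i, x⟫ • u i = x := by
  rw [projPerp_apply, sub_add_cancel]

lemma Orthonormal.norm_projPerp_le (hu : Orthonormal ℝ u) (x : E) : ‖projPerp u x‖ ≤ ‖x‖ := by
  have h := norm_add_sq_eq_norm_sq_add_norm_sq_real (hu.inner_projPerp_sum x fun i => ⟪u i, x⟫)
  rw [projPerp_add_sum] at h
  exact mul_self_le_mul_self_iff (norm_nonneg _) (norm_nonneg _) |>.2 (by nlinarith)

lemma Orthonormal.inner_eq_sum_add_inner_projPerp (hu : Orthonormal ℝ u) (x y : E) :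
    ⟪x, y⟫ = ∑ i, ⟪u i, x⟫ * ⟪u i, y⟫ + ⟪projPerp u x, projPerp u y⟫ := by
  conv_lhs => rw [← projPerp_add_sum (u := u) x, ← projPerp_add_sum (u := u) y]
  rw [inner_add_left, inner_add_right, inner_add_right, hu.inner_sum, hu.inner_projPerp_sum,
    hu.inner_sum_projPerp]
  simp [add_comm]

lemma Orthonormal.norm_sub_sum_smul_sq (hu : Orthonormal ℝ u) (x : E) (c : ι → ℝ) :
    ‖x - ∑ i, c i • u i‖ ^ 2 = ‖x‖ ^ 2 - 2 * ∑ i, c i * ⟪u i, x⟫ + ∑ i, c i ^ 2 := by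
  rw [@norm_sub_sq_real, real_inner_comm, sum_inner, ← real_inner_self_eq_norm_sq (∑ i, _),
    hu.inner_sum]
  simp [inner_smul_left, Finset.mul_sum, sq]

end OrthonormalFamily

lemma inner_apply_self_le_of_orthogonal {A : E →ₗ[ℝ] E} (hA : A.IsSymmetric) {w₁ w₂ : E}
    (hw₂ : ‖w₂‖ = 1) (hw₁₂ : ⟪w₁, w₂⟫ = 0) {μ : ℝ} (heig : A w₂ = μ • w₂)
    (hmin : ∀ v, ⟪v, w₁⟫ = 0 → ⟪v, w₂⟫ = 0 → ⟪A v, v⟫ ≤ μ * ‖v‖ ^ 2)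
    {w : E} (hw : ⟪w, w₁⟫ = 0) : ⟪A w, w⟫ ≤ μ * ‖w‖ ^ 2 := by
  set β := ⟪w₂, w⟫
  set v := w - β • w₂
  have hw₂₂ : ⟪w₂, w₂⟫ = 1 := by rw [real_inner_self_eq_norm_sq, hw₂, one_pow]
  have hv₁ : ⟪v, w₁⟫ = 0 := by
    rw [inner_sub_left, real_inner_smul_left, hw, real_inner_comm, hw₁₂, mul_zero, sub_zero]
  have hv₂ : ⟪v, w₂⟫ = 0 := by
    rw [inner_sub_left, real_inner_smul_left, hw₂₂, real_inner_comm]; ring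
  have hAv₂ : ⟪A v, w₂⟫ = 0 := by rw [hA, heig, real_inner_smul_right, hv₂, mul_zero]
  have hdecomp : w = v + β • w₂ := by simp [v]
  have hnorm : ‖w‖ ^ 2 = ‖v‖ ^ 2 + β ^ 2 := by
    rw [hdecomp, ← real_inner_self_eq_norm_sq, ← real_inner_self_eq_norm_sq]
    simp only [inner_add_left, inner_add_right, real_inner_smul_left, real_inner_smul_right, hv₂,
      real_inner_comm v w₂, hw₂₂]
    ring
  have hquad : ⟪A w, w⟫ = ⟪A v, v⟫ + μ * β ^ 2 := by
    rw [hdecomp]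
    simp only [map_add, map_smul, heig, inner_add_left, inner_add_right, real_inner_smul_left,
      real_inner_smul_right, hAv₂, hv₂, real_inner_comm v w₂, hw₂₂]
    ring
  rw [hquad, hnorm]
  nlinarith [hmin v hv₁ hv₂]

lemma Orthonormal.norm_smul_add_smul_sq {u : Fin 2 → E} (hu : Orthonormal ℝ u) (a b : ℝ) :
    ‖a • u 0 + b • u 1‖ ^ 2 = a ^ 2 + b ^ 2 := by
  have := hu.inner_sum ![a, b] ![a, b] Finset.univ
  simp only [Fin.sum_univ_two, real_inner_self_eq_norm_sq] at this
  simpa [sq] using this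

lemma exists_smul_add_smul_orthogonal (u : Fin 2 → E) (w : E) :
    ∃ a b : ℝ, 0 < a ^ 2 + b ^ 2 ∧ ⟪a • u 0 + b • u 1, w⟫ = 0 := by
  by_cases h : ⟪u 0, w⟫ = 0 ∧ ⟪u 1, w⟫ = 0
  · exact ⟨1, 0, by norm_num, by simp [h.1]⟩
  · refine ⟨⟪u 1, w⟫, -⟪u 0, w⟫, lt_of_le_of_ne (by positivity) fun h0 => h ?_, ?_⟩
    · constructor <;> nlinarith [sq_nonneg ⟪u 0, w⟫, sq_nonneg ⟪u 1, w⟫]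
    · simp only [inner_add_left, real_inner_smul_left]; ring

end InnerProductSpace

section TwoByTwo

lemma exists_orthogonal_trace_transpose_mul_eq (A : Matrix (Fin 2) (Fin 2) ℝ) :
    ∃ O : Matrix (Fin 2) (Fin 2) ℝ, Oᵀ * O = 1 ∧
      trace (Oᵀ * A) = √(∑ i, ∑ j, A i j ^ 2 + 2 * |A.det|) := by
  set ς : ℝ := if 0 ≤ A.det then 1 else -1
  have hς : ς ^ 2 = 1 := by unfold ς; split_ifs <;> norm_num
  have hςdet : ς * A.det = |A.det| := by
    unfold ς; split_ifs with h
    · rw [one_mul, abs_of_nonneg h]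
    · rw [neg_one_mul, abs_of_neg (not_le.1 h)]
  set z : ℂ := ⟨A 0 0 + ς * A 1 1, A 0 1 - ς * A 1 0⟩
  set c := Real.cos z.arg
  set t := Real.sin z.arg
  have hct : t ^ 2 + c ^ 2 = 1 := Real.sin_sq_add_cos_sq _
  have hc : ‖z‖ * c = A 0 0 + ς * A 1 1 := Complex.norm_mul_cos_arg z
  have ht : ‖z‖ * t = A 0 1 - ς * A 1 0 := Complex.norm_mul_sin_arg z
  have hz : ‖z‖ = √(∑ i, ∑ j, A i j ^ 2 + 2 * |A.det|) := by
    rw [Complex.norm_def, Complex.normSq_mk, ← hςdet, det_fin_two]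
    congr 1
    simp only [Fin.sum_univ_two]
    linear_combination (A 1 1 ^ 2 + A 1 0 ^ 2) * hς
  -- `A + ς • (adjugate A)ᵀ = !![z.re, z.im; -(ς * z.im), ς * z.re] = ‖z‖ • O`
  refine ⟨!![c, t; -(ς * t), ς * c], ?_, ?_⟩
  · ext i j
    fin_cases i <;> fin_cases j <;> simp [Matrix.mul_apply, Fin.sum_univ_two]
    · linear_combination hct + t ^ 2 * hς
    · linear_combination (-(c * t)) * hς
    · linear_combination (-(c * t)) * hς
    · linear_combination hct + c ^ 2 * hς
  · rw [← hz]
    simp [Matrix.trace, Matrix.mul_apply, Fin.sum_univ_two]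
    linear_combination (-c) * hc + (-t) * ht + ‖z‖ * hct

lemma exists_orthogonal_two_sub_le_trace (A : Matrix (Fin 2) (Fin 2) ℝ) {δ : ℝ} (hδ : δ ≤ 1 / 2)
    (h₀ : 1 - δ ≤ (Aᵀ * A) 0 0) (h₁ : 1 - δ ≤ (Aᵀ * A) 1 1) (h₀₁ : |(Aᵀ * A) 0 1| ≤ δ) :
    ∃ O : Matrix (Fin 2) (Fin 2) ℝ, Oᵀ * O = 1 ∧ 2 - 2 * δ ≤ trace (Oᵀ * A) := by
  obtain ⟨O, hO, htr⟩ := exists_orthogonal_trace_transpose_mul_eq A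
  refine ⟨O, hO, htr ▸ Real.le_sqrt_of_sq_le ?_⟩
  simp only [mul_apply, transpose_apply, Fin.sum_univ_two] at h₀ h₁ h₀₁
  have hδ0 : 0 ≤ δ := (abs_nonneg _).trans h₀₁
  have hc : (A 0 0 * A 0 1 + A 1 0 * A 1 1) ^ 2 ≤ δ ^ 2 :=
    sq_le_sq' (abs_le.1 h₀₁).1 (abs_le.1 h₀₁).2
  -- `det A ^ 2 = det (Aᵀ A)`, the determinant of a near-identity Gram matrix
  have hdet_sq : 1 - 2 * δ ≤ A.det ^ 2 := by
    have : A.det ^ 2 = (A 0 0 ^ 2 + A 1 0 ^ 2) * (A 0 1 ^ 2 + A 1 1 ^ 2)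
        - (A 0 0 * A 0 1 + A 1 0 * A 1 1) ^ 2 := by rw [det_fin_two]; ring
    nlinarith
  have hdet : 1 - 2 * δ ≤ |A.det| := by
    rcases le_total 1 |A.det| with h | h
    · linarith
    · nlinarith [sq_abs A.det, abs_nonneg A.det]
  simp only [Fin.sum_univ_two]
  nlinarith

end TwoByTwo

section Perturbation

variable {E : Type*} [NormedAddCommGroup E] [InnerProductSpace ℝ E]

theorem Orthonormal.exists_orthogonal_sum_norm_sub_sq_le {u w : Fin 2 → E} (hu : Orthonormal ℝ u)
    (hw : Orthonormal ℝ w) {ε : ℝ} (hε : ε ^ 2 ≤ 1 / 2) (hq : ∀ j, ‖projPerp u (w j)‖ ≤ ε) :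
    ∃ O : Matrix (Fin 2) (Fin 2) ℝ, Oᵀ * O = 1 ∧
      ∑ j, ‖w j - ∑ i, O i j • u i‖ ^ 2 ≤ 4 * ε ^ 2 := by
  set A : Matrix (Fin 2) (Fin 2) ℝ := of fun i j => ⟪u i, w j⟫
  have hgram : ∀ j k, (Aᵀ * A) j k = ⟪w j, w k⟫ - ⟪projPerp u (w j), projPerp u (w k)⟫ := by
    intro j k
    rw [hu.inner_eq_sum_add_inner_projPerp]
    simp [A, mul_apply]
  have hε0 : 0 ≤ ε := (norm_nonneg _).trans (hq 0)
  have hdiag : ∀ j, 1 - ε ^ 2 ≤ (Aᵀ * A) j j := by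
    intro j
    rw [hgram, real_inner_self_eq_norm_sq, real_inner_self_eq_norm_sq, hw.1 j]
    have := pow_le_pow_left₀ (norm_nonneg _) (hq j) 2
    linarith
  have hoff : |(Aᵀ * A) 0 1| ≤ ε ^ 2 := by
    rw [hgram, hw.2 (by decide), zero_sub, abs_neg, sq]
    exact (abs_real_inner_le_norm _ _).trans (mul_le_mul (hq 0) (hq 1) (norm_nonneg _) hε0)
  obtain ⟨O, hO, htr⟩ := exists_orthogonal_two_sub_le_trace A hε (hdiag 0) (hdiag 1) hoff
  refine ⟨O, hO, ?_⟩
  have hcol : ∀ j, ∑ i, O i j ^ 2 = 1 := fun j => by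
    simpa [mul_apply, sq] using congr_fun₂ hO j j
  have hdist : ∀ j, ‖w j - ∑ i, O i j • u i‖ ^ 2 = 2 - 2 * ∑ i, O i j * A i j := by
    intro j
    rw [hu.norm_sub_sum_smul_sq, hw.1 j, hcol j]
    simp only [A, of_apply]
    ring
  simp only [trace, diag, mul_apply, transpose_apply, Fin.sum_univ_two] at htr
  rw [Fin.sum_univ_two, hdist, hdist]
  simp only [Fin.sum_univ_two]
  linarith

variable [CompleteSpace E]

lemma norm_star_apply_of_mul_star_eigen {T : E →L[ℝ] E} {v : E} (hv : ‖v‖ = 1) {σ : ℝ}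
    (hσ : 0 ≤ σ) (heig : (T * star T) v = σ ^ 2 • v) : ‖star T v‖ = σ := by
  have h : ‖star T v‖ ^ 2 = σ ^ 2 := by
    rw [← real_inner_self_eq_norm_sq, ContinuousLinearMap.star_eq_adjoint,
      ContinuousLinearMap.adjoint_inner_left, ← ContinuousLinearMap.star_eq_adjoint,
      ← mul_apply_eq_comp, heig, real_inner_smul_right, real_inner_self_eq_norm_sq,
      hv]
    ring
  exact (sq_eq_sq₀ (norm_nonneg _) hσ).1 h

theorem Orthonormal.norm_projPerp_le_of_mul_star_eigen {ι : Type*} [Fintype ι] {u : ι → E}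
    (hu : Orthonormal ℝ u) {T Z : E →L[ℝ] E}
    (hT : ∀ x, T x - Z x ∈ Submodule.span ℝ (Set.range u)) {v : E} (hv : ‖v‖ = 1) {σ : ℝ}
    (hσ : 0 < σ) (heig : (T * star T) v = σ ^ 2 • v) : ‖projPerp u v‖ ≤ ‖Z‖ / σ := by
  set y := star T v
  have hy : ‖y‖ = σ := norm_star_apply_of_mul_star_eigen hv hσ.le heig
  have hproj : σ ^ 2 • projPerp u v = projPerp u (Z y) := by
    rw [← map_smul, ← heig, mul_apply_eq_comp, ← sub_add_cancel (T y) (Z y), map_add,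
      hu.projPerp_eq_zero (hT y), zero_add]
  have h : σ ^ 2 * ‖projPerp u v‖ ≤ ‖Z‖ * σ :=
    calc σ ^ 2 * ‖projPerp u v‖ = ‖projPerp u (Z y)‖ := by
          rw [← hproj, norm_smul, Real.norm_of_nonneg (sq_nonneg σ)]
      _ ≤ ‖Z y‖ := hu.norm_projPerp_le _
      _ ≤ ‖Z‖ * σ := hy ▸ Z.le_opNorm y
  rw [le_div_iff₀ hσ]
  nlinarith

theorem Orthonormal.sub_norm_mul_le_norm_star_apply {u : Fin 2 → E} (hu : Orthonormal ℝ u)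
    {T Z : E →L[ℝ] E} {s : ℝ} (hT : ∀ x, T x = s • (⟪u 0, x⟫ • u 1 - ⟪u 1, x⟫ • u 0) + Z x)
    (a b : ℝ) :
    (s - ‖Z‖) * ‖a • u 0 + b • u 1‖ ≤ ‖star T (a • u 0 + b • u 1)‖ := by
  set w := a • u 0 + b • u 1
  set g := b • u 0 - a • u 1
  have hg : ‖g‖ = ‖w‖ := by
    have h := hu.norm_smul_add_smul_sq b (-a)
    rw [neg_smul, ← sub_eq_add_neg, neg_sq, add_comm, ← hu.norm_smul_add_smul_sq a b] at h
    exact (sq_eq_sq₀ (norm_nonneg _) (norm_nonneg _)).1 h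
  -- `T` acts on `span {u 0, u 1}` as `s` times a rotation by a right angle, sending `g` to `s w`.
  have hTg : T g = s • w + Z g := by
    rw [hT]
    simp [g, w, inner_sub_right, real_inner_smul_right, orthonormal_iff_ite.1 hu, hu.1]
    module
  have hinner : ⟪star T w, g⟫ = s * ‖w‖ ^ 2 + ⟪w, Z g⟫ := by
    rw [ContinuousLinearMap.star_eq_adjoint, ContinuousLinearMap.adjoint_inner_left, hTg,
      inner_add_right, real_inner_smul_right, real_inner_self_eq_norm_sq]
  have hZ : -(‖Z‖ * ‖w‖ ^ 2) ≤ ⟪w, Z g⟫ :=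
    calc -(‖Z‖ * ‖w‖ ^ 2) = -(‖w‖ * (‖Z‖ * ‖g‖)) := by rw [hg]; ring
      _ ≤ -|⟪w, Z g⟫| := neg_le_neg <| (abs_real_inner_le_norm w (Z g)).trans <|
          mul_le_mul_of_nonneg_left (Z.le_opNorm g) (norm_nonneg w)
      _ ≤ ⟪w, Z g⟫ := neg_abs_le _
  have hcs : ⟪star T w, g⟫ ≤ ‖star T w‖ * ‖w‖ := hg ▸ real_inner_le_norm _ _
  rcases (norm_nonneg w).eq_or_lt with h0 | hpos
  · rw [← h0, mul_zero]; exact norm_nonneg _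
  · refine le_of_mul_le_mul_right ?_ hpos
    nlinarith

theorem Orthonormal.sub_norm_le_of_mul_star_eigen {u w : Fin 2 → E} (hu : Orthonormal ℝ u)
    (hw : Orthonormal ℝ w) {T Z : E →L[ℝ] E} {s : ℝ}
    (hT : ∀ x, T x = s • (⟪u 0, x⟫ • u 1 - ⟪u 1, x⟫ • u 0) + Z x) {σ : ℝ} (hσ : 0 ≤ σ)
    (heig : (T * star T) (w 1) = σ ^ 2 • w 1)
    (hmin : ∀ v, ⟪v, w 0⟫ = 0 → ⟪v, w 1⟫ = 0 → ⟪(T * star T) v, v⟫ ≤ σ ^ 2 * ‖v‖ ^ 2) :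
    s - ‖Z‖ ≤ σ := by
  obtain ⟨a, b, hab, hperp⟩ := exists_smul_add_smul_orthogonal u (w 0)
  set x := a • u 0 + b • u 1
  have hx : 0 < ‖x‖ := by
    nlinarith [hu.norm_smul_add_smul_sq a b, norm_nonneg x]
  have hquad : ⟪(T * star T) x, x⟫ = ‖star T x‖ ^ 2 := by
    rw [mul_apply_eq_comp, ← real_inner_self_eq_norm_sq, ContinuousLinearMap.star_eq_adjoint,
      ContinuousLinearMap.adjoint_inner_right]
  have hup : ‖star T x‖ ≤ σ * ‖x‖ := by
    have := inner_apply_self_le_of_orthogonal (IsSelfAdjoint.mul_star_self T).isSymmetric (hw.1 1)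
      (hw.2 (by decide : (0 : Fin 2) ≠ 1)) heig hmin hperp
    exact (sq_le_sq₀ (norm_nonneg _) (by positivity)).1 (by rw [← hquad, mul_pow]; exact this)
  have hlow := hu.sub_norm_mul_le_norm_star_apply hT a b
  exact le_of_mul_le_mul_right (hlow.trans hup) hx

theorem exists_orthogonal_sum_norm_sub_sq_le_of_mul_star_eigen {u w : Fin 2 → E}
    (hu : Orthonormal ℝ u) (hw : Orthonormal ℝ w) {T Z : E →L[ℝ] E} {s : ℝ}
    (hT : ∀ x, T x = s • (⟪u 0, x⟫ • u 1 - ⟪u 1, x⟫ • u 0) + Z x) (hs : 0 < s)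
    (hZs : 3 * ‖Z‖ ≤ s) {σ₁ σ₂ : ℝ} (hσ₂ : 0 ≤ σ₂) (hσ₁₂ : σ₂ ≤ σ₁)
    (heig₁ : (T * star T) (w 0) = σ₁ ^ 2 • w 0) (heig₂ : (T * star T) (w 1) = σ₂ ^ 2 • w 1)
    (hmin : ∀ v, ⟪v, w 0⟫ = 0 → ⟪v, w 1⟫ = 0 → ⟪(T * star T) v, v⟫ ≤ σ₂ ^ 2 * ‖v‖ ^ 2) :
    ∃ O : Matrix (Fin 2) (Fin 2) ℝ, Oᵀ * O = 1 ∧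
      ∑ j, ‖w j - ∑ i, O i j • u i‖ ^ 2 ≤ (3 * ‖Z‖ / s) ^ 2 := by
  have hΔ := norm_nonneg Z
  have hgap : 0 < s - ‖Z‖ := by linarith
  have hσ₂_low : s - ‖Z‖ ≤ σ₂ := hu.sub_norm_le_of_mul_star_eigen hw hT hσ₂ heig₂ hmin
  have hspan : ∀ x, T x - Z x ∈ Submodule.span ℝ (Set.range u) := fun x => by
    rw [hT, add_sub_cancel_right]
    exact Submodule.smul_mem _ _ (Submodule.sub_mem _
      (Submodule.smul_mem _ _ (Submodule.subset_span ⟨1, rfl⟩))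
      (Submodule.smul_mem _ _ (Submodule.subset_span ⟨0, rfl⟩)))
  have hq : ∀ j, ‖projPerp u (w j)‖ ≤ ‖Z‖ / (s - ‖Z‖) := by
    intro j
    fin_cases j
    · exact (hu.norm_projPerp_le_of_mul_star_eigen hspan (hw.1 0) (by linarith) heig₁).trans
        (div_le_div_of_nonneg_left hΔ hgap (by linarith))
    · exact (hu.norm_projPerp_le_of_mul_star_eigen hspan (hw.1 1) (by linarith) heig₂).trans
        (div_le_div_of_nonneg_left hΔ hgap hσ₂_low)
  have hε : ‖Z‖ / (s - ‖Z‖) ≤ 1 / 2 := by rw [div_le_iff₀ hgap]; linarith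
  have hε3 : 2 * (‖Z‖ / (s - ‖Z‖)) ≤ 3 * ‖Z‖ / s := by
    rw [mul_div_assoc', div_le_div_iff₀ hgap hs]
    nlinarith
  obtain ⟨O, hO, hsum⟩ := hu.exists_orthogonal_sum_norm_sub_sq_le hw
    (by nlinarith [div_nonneg hΔ hgap.le]) hq
  refine ⟨O, hO, hsum.trans ?_⟩
  calc 4 * (‖Z‖ / (s - ‖Z‖)) ^ 2 = (2 * (‖Z‖ / (s - ‖Z‖))) ^ 2 := by ring
    _ ≤ (3 * ‖Z‖ / s) ^ 2 := pow_le_pow_left₀ (by positivity) hε3 2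

end Perturbation

section EuclideanBridge

variable {m n : ℕ}

lemma norm2_eq_norm (x : Fin n → ℝ) : norm2 x = ‖toLp 2 x‖ := by
  simp [norm2, EuclideanSpace.norm_eq]

lemma inner2_eq_inner (x y : Fin n → ℝ) : inner2 x y = ⟪toLp 2 x, toLp 2 y⟫ := by
  simp [inner2, PiLp.inner_apply, mul_comm]

lemma inner2_smul_smul (a b : ℝ) (x y : Fin n → ℝ) :
    inner2 (a • x) (b • y) = a * b * inner2 x y := by
  simp only [inner2, Pi.smul_apply, smul_eq_mul, Finset.mul_sum]
  exact Finset.sum_congr rfl fun i _ => by ring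

lemma inner2_self_eq_norm2_sq (x : Fin n → ℝ) : inner2 x x = norm2 x ^ 2 := by
  rw [inner2_eq_inner, norm2_eq_norm, real_inner_self_eq_norm_sq]

lemma norm2_pos {x : Fin n → ℝ} (hx : x ≠ 0) : 0 < norm2 x := by
  rw [norm2_eq_norm, norm_pos_iff]
  exact fun h => hx (by simpa using congrArg ofLp h)

lemma specNorm_eq_norm_toEuclideanCLM (A : Matrix (Fin n) (Fin n) ℝ) :
    specNorm A = ‖toEuclideanCLM (𝕜 := ℝ) A‖ := by
  rw [← ContinuousLinearMap.sSup_unitClosedBall_eq_norm, specNorm, iSup]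
  congr 1
  ext y
  simp only [Set.mem_range, Subtype.exists, norm2_eq_norm, Set.mem_image, Metric.mem_closedBall,
    dist_zero_right]
  exact ⟨fun ⟨x, hx, hy⟩ => ⟨toLp 2 x, hx, hy⟩, fun ⟨x, hx, hy⟩ => ⟨ofLp x, hx, hy⟩⟩

lemma specNorm_le_sqrt_sum_sq_norm_col (A : Matrix (Fin m) (Fin n) ℝ) :
    specNorm A ≤ √(∑ j, ‖toLp 2 (Aᵀ j)‖ ^ 2) := by
  have : Nonempty {x : Fin n → ℝ // norm2 x ≤ 1} := ⟨⟨0, by simp [norm2]⟩⟩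
  refine ciSup_le fun ⟨x, hx⟩ => ?_
  have hcols : toLp 2 (A *ᵥ x) = ∑ j, x j • toLp 2 (Aᵀ j) := by
    ext i
    simp [mulVec, dotProduct, mul_comm]
  rw [norm2_eq_norm] at hx ⊢
  calc ‖toLp 2 (A *ᵥ x)‖ ≤ ∑ j, |x j| * ‖toLp 2 (Aᵀ j)‖ := by
        rw [hcols]
        exact (norm_sum_le _ _).trans_eq (by simp [norm_smul])
    _ ≤ √(∑ j, |x j| ^ 2) * √(∑ j, ‖toLp 2 (Aᵀ j)‖ ^ 2) := Real.sum_mul_le_sqrt_mul_sqrt _ _ _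
    _ ≤ √(∑ j, ‖toLp 2 (Aᵀ j)‖ ^ 2) := by
        refine mul_le_of_le_one_left (Real.sqrt_nonneg _) ?_
        simpa [EuclideanSpace.norm_eq] using hx

lemma toEuclideanCLM_mul_transpose (H : Matrix (Fin n) (Fin n) ℝ) :
    toEuclideanCLM (𝕜 := ℝ) (H * Hᵀ) =
      toEuclideanCLM (𝕜 := ℝ) H * star (toEuclideanCLM (𝕜 := ℝ) H) := by
  rw [map_mul, ← conjTranspose_eq_transpose_of_trivial, ← star_eq_conjTranspose, map_star]

lemma toEuclideanCLM_vecMulVec_apply (a b : Fin n → ℝ) (x : EuclideanSpace ℝ (Fin n)) :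
    toEuclideanCLM (𝕜 := ℝ) (vecMulVec a b) x = ⟪toLp 2 b, x⟫ • toLp 2 a := by
  ext i
  simp [vecMulVec_mulVec, PiLp.inner_apply, dotProduct, mul_comm]

lemma orthonormal_toLp_pair {a b : Fin n → ℝ} (ha : inner2 a a = 1) (hb : inner2 b b = 1)
    (hab : inner2 a b = 0) : Orthonormal ℝ ![toLp 2 a, toLp 2 b] := by
  rw [orthonormal_iff_ite]
  intro i j
  have hba : inner2 b a = 0 := by rw [inner2_eq_inner, real_inner_comm, ← inner2_eq_inner, hab]
  fin_cases i <;> fin_cases j <;>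
    simp only [Fin.zero_eta, Fin.mk_one, Matrix.cons_val_zero, Matrix.cons_val_one,
      ← inner2_eq_inner] <;> simp [ha, hb, hab, hba]

end EuclideanBridge

theorem exists_orthogonal_specNorm_twoCols_sub_le {n : ℕ} {u₁ u₂ : Fin n → ℝ}
    (h₁ : inner2 u₁ u₁ = 1) (h₂ : inner2 u₂ u₂ = 1) (h₁₂ : inner2 u₁ u₂ = 0) {s Δ : ℝ}
    (hs : 0 < s) (hΔs : 3 * Δ ≤ s) {Z H : Matrix (Fin n) (Fin n) ℝ} (hZ : specNorm Z ≤ Δ)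
    (hH : H = s • (vecMulVec u₂ u₁ - vecMulVec u₁ u₂) + Z) {σ₁ σ₂ : ℝ} {w₁ w₂ : Fin n → ℝ}
    (htop : IsTopTwoSingular H σ₁ σ₂ w₁ w₂) :
    ∃ O : Matrix (Fin 2) (Fin 2) ℝ, Oᵀ * O = 1 ∧
      specNorm (twoCols w₁ w₂ - twoCols u₁ u₂ * O) ≤ 3 * Δ / s := by
  obtain ⟨hσ₂, hσ₁₂, hw₁, hw₂, hw₁₂, heig₁, heig₂, hmin⟩ := htop
  set u := ![toLp 2 u₁, toLp 2 u₂]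
  set w := ![toLp 2 w₁, toLp 2 w₂]
  set T := toEuclideanCLM (𝕜 := ℝ) H
  rw [specNorm_eq_norm_toEuclideanCLM] at hZ
  have hT : ∀ x, T x = s • (⟪u 0, x⟫ • u 1 - ⟪u 1, x⟫ • u 0) + toEuclideanCLM (𝕜 := ℝ) Z x := by
    intro x
    simp [T, hH, toEuclideanCLM_vecMulVec_apply, u]
  have hTT : ∀ x, (T * star T) (toLp 2 x) = toLp 2 ((H * Hᵀ) *ᵥ x) := fun x => by
    rw [← toEuclideanCLM_mul_transpose, toEuclideanCLM_toLp]
  obtain ⟨O, hO, hsum⟩ := exists_orthogonal_sum_norm_sub_sq_le_of_mul_star_eigen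
    (orthonormal_toLp_pair h₁ h₂ h₁₂) (orthonormal_toLp_pair hw₁ hw₂ hw₁₂) hT hs (by linarith)
    hσ₂ hσ₁₂ (by simp [hTT, heig₁]) (by simp [hTT, heig₂]) fun v hv₁ hv₂ => by
      have h := hmin (ofLp v) (by rwa [inner2_eq_inner]) (by rwa [inner2_eq_inner])
      rwa [inner2_eq_inner, inner2_eq_inner, ← hTT, toLp_ofLp, real_inner_self_eq_norm_sq] at h
  refine ⟨O, hO, ?_⟩
  set D := twoCols w₁ w₂ - twoCols u₁ u₂ * O
  have hcol : ∀ j, toLp 2 (Dᵀ j) = w j - ∑ i, O i j • u i := by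
    intro j
    ext k
    fin_cases j <;> simp [D, twoCols, mul_apply, Fin.sum_univ_two, w, u, mul_comm]
  calc specNorm D ≤ √(∑ j, ‖toLp 2 (Dᵀ j)‖ ^ 2) := specNorm_le_sqrt_sum_sq_norm_col D
    _ = √(∑ j, ‖w j - ∑ i, O i j • u i‖ ^ 2) := by simp_rw [hcol]
    _ ≤ 3 * ‖toEuclideanCLM (𝕜 := ℝ) Z‖ / s := Real.sqrt_le_iff.2 ⟨by positivity, hsum⟩
    _ ≤ 3 * Δ / s := by gcongr

section CenteredSignal

variable {n : ℕ}

lemma inner2_onesVec_self : inner2 (onesVec n) (onesVec n) = n := by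
  simp [inner2, onesVec]

lemma inner2_onesVec_sub_mean_smul (hn : (n : ℝ) ≠ 0) (r : Fin n → ℝ) :
    inner2 (onesVec n) (r - (inner2 r (onesVec n) / n) • onesVec n) = 0 := by
  simp [inner2, onesVec, Finset.sum_sub_distrib]
  field_simp
  ring

lemma vecMulVec_sub_smul_sub_vecMulVec (a b : Fin n → ℝ) (c : ℝ) :
    vecMulVec (a - c • b) b - vecMulVec b (a - c • b) = vecMulVec a b - vecMulVec b a := by
  rw [sub_vecMulVec, vecMulVec_sub, smul_vecMulVec, vecMulVec_smul]
  abel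

end CenteredSignal

theorem stmt_12_general {n : ℕ} (hn : 2 ≤ n) (p η : ℝ)
    (hp : 0 < p) (hη : 0 < η)
    (r : Fin n → ℝ)
    (e : Fin n → ℝ) (he : e = onesVec n)
    (α : ℝ) (hα : α = inner2 r e / n) (hne : r ≠ α • e)
    (u₁ u₂ : Fin n → ℝ)
    (hu₁ : u₁ = (Real.sqrt n)⁻¹ • e)
    (hu₂ : u₂ = (norm2 (r - α • e))⁻¹ • (r - α • e))
    (C : Matrix (Fin n) (Fin n) ℝ) (hC : C = vecMulVec r e - vecMulVec e r)
    (Z : Matrix (Fin n) (Fin n) ℝ) (Δ : ℝ) (hZ : specNorm Z ≤ Δ)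
    (H : Matrix (Fin n) (Fin n) ℝ) (hH : H = (η * p) • C + Z)
    (hΔ : Δ ≤ η * p * norm2 (r - α • e) * Real.sqrt n / 3)
    (σh₁ σh₂ : ℝ) (uh₁ uh₂ : Fin n → ℝ)
    (htop : IsTopTwoSingular H σh₁ σh₂ uh₁ uh₂) :
    ∃ O : Matrix (Fin 2) (Fin 2) ℝ, Oᵀ * O = 1 ∧
      specNorm (twoCols uh₁ uh₂ - twoCols u₁ u₂ * O) ≤
        3 * Δ / (η * p * Real.sqrt n * norm2 (r - α • e)) := by
  subst he
  have hn0 : (0 : ℝ) < n := by exact_mod_cast (show 0 < n by omega)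
  set ρ := norm2 (r - α • onesVec n) with hρdef
  have hρ : 0 < ρ := norm2_pos (sub_ne_zero.2 hne)
  have h₁ : inner2 u₁ u₁ = 1 := by
    rw [hu₁, inner2_smul_smul, inner2_onesVec_self, ← mul_inv, Real.mul_self_sqrt hn0.le,
      inv_mul_cancel₀ hn0.ne']
  have h₂ : inner2 u₂ u₂ = 1 := by
    rw [hu₂, inner2_smul_smul, inner2_self_eq_norm2_sq, ← hρdef]
    field_simp
  have h₁₂ : inner2 u₁ u₂ = 0 := by
    rw [hu₁, hu₂, inner2_smul_smul, hα, inner2_onesVec_sub_mean_smul hn0.ne', mul_zero]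
  have hC' : C = (√n * ρ) • (vecMulVec u₂ u₁ - vecMulVec u₁ u₂) := by
    rw [hC, ← vecMulVec_sub_smul_sub_vecMulVec r (onesVec n) α, hu₁, hu₂, smul_vecMulVec,
      vecMulVec_smul, smul_vecMulVec, vecMulVec_smul]
    match_scalars <;> field_simp
  exact exists_orthogonal_specNorm_twoCols_sub_le h₁ h₂ h₁₂ (by positivity) (by linarith) hZ
    (by rw [hH, hC', smul_smul, ← mul_assoc]) htop

/-- Lemma: existence of an aligning orthogonal matrix `O*`. -/
theorem stmt_12 {n : ℕ} (hn : 2 ≤ n) (M p η : ℝ) (hM : 0 < M)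
    (hp : 0 < p) (hp1 : p ≤ 1) (hη : 0 < η) (hη1 : η ≤ 1)
    (r : Fin n → ℝ) (hr : ∀ i, 0 ≤ r i ∧ r i ≤ M)
    (e : Fin n → ℝ) (he : e = onesVec n)
    (α : ℝ) (hα : α = inner2 r e / n) (hne : r ≠ α • e)
    (u₁ u₂ : Fin n → ℝ)
    (hu₁ : u₁ = (Real.sqrt n)⁻¹ • e)
    (hu₂ : u₂ = (norm2 (r - α • e))⁻¹ • (r - α • e))
    (C : Matrix (Fin n) (Fin n) ℝ) (hC : C = vecMulVec r e - vecMulVec e r)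
    (Z : Matrix (Fin n) (Fin n) ℝ) (Δ : ℝ) (hZ : specNorm Z ≤ Δ)
    (H : Matrix (Fin n) (Fin n) ℝ) (hH : H = (η * p) • C + Z)
    (hΔ : Δ ≤ η * p * norm2 (r - α • e) * Real.sqrt n / 3)
    (σh₁ σh₂ : ℝ) (uh₁ uh₂ : Fin n → ℝ)
    (htop : IsTopTwoSingular H σh₁ σh₂ uh₁ uh₂) :
    ∃ O : Matrix (Fin 2) (Fin 2) ℝ, Oᵀ * O = 1 ∧
      specNorm (twoCols uh₁ uh₂ - twoCols u₁ u₂ * O) ≤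
        3 * Δ / (η * p * Real.sqrt n * norm2 (r - α • e)) :=
  stmt_12_general hn p η hp hη r e he α hα hne u₁ u₂ hu₁ hu₂ C hC Z Δ hZ H hH hΔ σh₁ σh₂ uh₁ uh₂
    htop

end
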